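/- arXiv:math/0611791 — 2 statements merged into one kernel-verified Lean document; each statement's English description precedes it below -/
import Mathlib

section
/- Let r be a positive integer, a_1,…,a_r and b_1,…,b_r positive integers, q ∈ ℂ with 0 < |q| < 1, x ∈ ℝ with x > 0, and let n be a positive odd integer. Then ζ_r(−n, x | a_1,…,a_r; b_1,…,b_r) = E_{n,q}^{(r)}(x | a_1,…,a_r; b_1,…,b_r); that is, the value at s = −n of the multivariate Hurwitz-type q-zeta function equals the n-th iterated derivative at t = 0 of t ↦ 2^r e^{xt} / ∏_{j=1}^r (q^{b_j} e^{a_j t} + 1). -/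
/-! For small `‖t‖` each factor `(q ^ b_j e ^ (a_j t) + 1)⁻¹` is a geometric series in
`-q ^ b_j e ^ (a_j t)`. Multiplying the `r` series expands the generating function as the
absolutely convergent exponential sum `2 ^ r Σ_m (-1) ^ |m| q ^ (b·m) e ^ ((x + a·m) t)`, whose
coefficients stay summable against the weight `e ^ (R |x + a·m|)` for some `R > 0` because
`‖q‖ < 1`. Such a sum can be differentiated term by term near `0`, and its `n`-th derivative
at `0` is `2 ^ r Σ_m (-1) ^ |m| q ^ (b·m) (x + a·m) ^ n`, the zeta sum at `s = -n`. -/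

open Finset Filter
open scoped Topology Nat

section ExpSum

theorem pow_le_factorial_div_pow_mul_exp {y ε : ℝ} (hy : 0 ≤ y) (hε : 0 < ε) (k : ℕ) :
    y ^ k ≤ k ! / ε ^ k * Real.exp (ε * y) := by
  have h := Real.pow_div_factorial_le_exp _ (mul_nonneg hε.le hy) k
  rw [div_le_iff₀ (by positivity), mul_pow] at h
  rw [div_mul_eq_mul_div, le_div_iff₀ (by positivity)]
  linarith

theorem norm_mul_pow_mul_cexp_le (c μ : ℂ) (k : ℕ) {t : ℂ} {ρ R : ℝ} (ht : ‖t‖ ≤ ρ)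
    (hρR : ρ < R) :
    ‖c * μ ^ k * Complex.exp (μ * t)‖ ≤ k ! / (R - ρ) ^ k * (‖c‖ * Real.exp (R * ‖μ‖)) := by
  have hexp : ‖Complex.exp (μ * t)‖ ≤ Real.exp (ρ * ‖μ‖) :=
    (Complex.norm_exp_le_exp_norm _).trans <| Real.exp_le_exp.2 <| by
      rw [norm_mul, mul_comm]; exact mul_le_mul_of_nonneg_right ht (norm_nonneg _)
  have hpow := pow_le_factorial_div_pow_mul_exp (norm_nonneg μ) (sub_pos.2 hρR) k
  calc ‖c * μ ^ k * Complex.exp (μ * t)‖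
      ≤ ‖c‖ * ‖μ‖ ^ k * Real.exp (ρ * ‖μ‖) := by
        rw [norm_mul, norm_mul, norm_pow]; gcongr
    _ ≤ ‖c‖ * (k ! / (R - ρ) ^ k * Real.exp ((R - ρ) * ‖μ‖)) * Real.exp (ρ * ‖μ‖) := by
        gcongr
    _ = k ! / (R - ρ) ^ k * (‖c‖ * Real.exp (R * ‖μ‖)) := by
        rw [mul_assoc, mul_assoc, ← Real.exp_add]; ring_nf

variable {ι : Type*} {c μ : ι → ℂ} {R : ℝ}

theorem hasDerivAt_tsum_mul_pow_mul_cexp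
    (hsum : Summable fun i => ‖c i‖ * Real.exp (R * ‖μ i‖)) (k : ℕ) {t : ℂ} (ht : ‖t‖ < R) :
    HasDerivAt (fun z => ∑' i, c i * μ i ^ k * Complex.exp (μ i * z))
      (∑' i, c i * μ i ^ (k + 1) * Complex.exp (μ i * t)) t := by
  -- On a smaller ball the polynomial weights `μ ^ k` cost only a factor `k! / (R - ρ) ^ k`.
  obtain ⟨ρ, htρ, hρR⟩ := exists_between ht
  have hbound : ∀ k, ∀ i, ∀ z ∈ Metric.ball (0 : ℂ) ρ,
      ‖c i * μ i ^ k * Complex.exp (μ i * z)‖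
        ≤ k ! / (R - ρ) ^ k * (‖c i‖ * Real.exp (R * ‖μ i‖)) := fun k i z hz =>
    norm_mul_pow_mul_cexp_le _ _ k (mem_ball_zero_iff.1 hz).le hρR
  have ht' : t ∈ Metric.ball (0 : ℂ) ρ := mem_ball_zero_iff.2 htρ
  refine hasDerivAt_tsum_of_isPreconnected (hsum.mul_left _) Metric.isOpen_ball
    (convex_ball _ _).isPreconnected (fun i z _ => ?_) (hbound (k + 1)) ht'
    (.of_norm_bounded (hsum.mul_left _) fun i => hbound k i t ht') ht'
  have h := ((hasDerivAt_id' z).const_mul (μ i)).cexp.const_mul (c i * μ i ^ k)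
  rw [mul_one] at h
  exact h.congr_deriv (by ring)

theorem iteratedDeriv_tsum_mul_cexp
    (hsum : Summable fun i => ‖c i‖ * Real.exp (R * ‖μ i‖)) (k : ℕ) {t : ℂ} (ht : ‖t‖ < R) :
    iteratedDeriv k (fun z => ∑' i, c i * Complex.exp (μ i * z)) t
      = ∑' i, c i * μ i ^ k * Complex.exp (μ i * t) := by
  induction k generalizing t with
  | zero => simp
  | succ k ih =>
    have hball : {z : ℂ | ‖z‖ < R} ∈ 𝓝 t :=
      (isOpen_lt continuous_norm continuous_const).mem_nhds ht
    rw [iteratedDeriv_succ, (eventuallyEq_of_mem hball fun z hz => ih hz).deriv_eq]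
    exact (hasDerivAt_tsum_mul_pow_mul_cexp hsum k ht).deriv

end ExpSum

section PiProduct

variable {𝕜 β : Type*} [NormedField 𝕜]

theorem summable_norm_prod_pi : ∀ {r : ℕ} {f : Fin r → β → 𝕜},
    (∀ j, Summable fun m => ‖f j m‖) → Summable fun m : Fin r → β => ‖∏ j, f j (m j)‖
  | 0, f, _ => by simpa using Summable.of_finite
  | r + 1, f, hf => by
    have hprod := (hf 0).mul_norm (summable_norm_prod_pi fun j => hf j.succ)
    refine ((Fin.consEquiv fun _ => β).summable_iff).mp (hprod.congr fun p => ?_)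
    simp [Fin.consEquiv, Fin.prod_univ_succ]

theorem tsum_prod_pi [CompleteSpace 𝕜] : ∀ {r : ℕ} {f : Fin r → β → 𝕜},
    (∀ j, Summable fun m => ‖f j m‖) → ∑' m : Fin r → β, ∏ j, f j (m j) = ∏ j, ∑' m, f j m
  | 0, f, _ => by simp
  | r + 1, f, hf => by
    rw [Fin.prod_univ_succ, ← tsum_prod_pi fun j => hf j.succ,
      tsum_mul_tsum_of_summable_norm (hf 0) (summable_norm_prod_pi fun j => hf j.succ),
      ← (Fin.consEquiv fun _ => β).tsum_eq]
    simp [Fin.consEquiv, Fin.prod_univ_succ]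

end PiProduct

section QZeta

variable {r : ℕ} (a b : Fin r → ℕ) (q : ℂ) (x : ℝ)

def qZetaCoeff (m : Fin r → ℕ) : ℂ := (-1) ^ (∑ j, m j) * q ^ (∑ j, b j * m j)

def qZetaShift (m : Fin r → ℕ) : ℝ := x + (∑ j, a j * m j : ℕ)

theorem cexp_mul_prod_neg_pow (t : ℂ) (m : Fin r → ℕ) :
    Complex.exp (x * t) * ∏ j, (-(q ^ b j * Complex.exp (a j * t))) ^ m j
      = qZetaCoeff b q m * Complex.exp (qZetaShift a x m * t) := by
  have hfactor : ∀ j, (-(q ^ b j * Complex.exp (a j * t))) ^ m j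
      = (-1) ^ m j * q ^ (b j * m j) * Complex.exp ((a j * m j : ℕ) * t) := fun j => by
    rw [neg_pow, mul_pow, ← pow_mul, ← Complex.exp_nat_mul]
    push_cast
    ring_nf
  simp only [hfactor, prod_mul_distrib, prod_pow_eq_pow_sum, ← Complex.exp_sum, qZetaCoeff,
    qZetaShift]
  rw [mul_left_comm, ← Complex.exp_add, ← sum_mul, ← add_mul]
  push_cast
  ring

theorem qEulerGenFun_eq_tsum {t : ℂ} (ht : ∀ j, ‖q ^ b j * Complex.exp (a j * t)‖ < 1) :
    2 ^ r * Complex.exp (x * t) / ∏ j, (q ^ b j * Complex.exp (a j * t) + 1)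
      = ∑' m, 2 ^ r * qZetaCoeff b q m * Complex.exp (qZetaShift a x m * t) := by
  have hgeom : ∀ j, ∑' m : ℕ, (-(q ^ b j * Complex.exp (a j * t))) ^ m
      = (q ^ b j * Complex.exp (a j * t) + 1)⁻¹ := fun j => by
    rw [tsum_geometric_of_norm_lt_one (by rw [norm_neg]; exact ht j), sub_neg_eq_add, add_comm]
  have hsummable : ∀ j, Summable fun m : ℕ => ‖(-(q ^ b j * Complex.exp (a j * t))) ^ m‖ :=
    fun j => by simpa [norm_pow] using summable_geometric_of_lt_one (norm_nonneg _) (ht j)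
  calc 2 ^ r * Complex.exp (x * t) / ∏ j, (q ^ b j * Complex.exp (a j * t) + 1)
      = 2 ^ r * (Complex.exp (x * t) *
          ∏ j, ∑' m : ℕ, (-(q ^ b j * Complex.exp (a j * t))) ^ m) := by
        simp only [hgeom, prod_inv_distrib]; ring
    _ = ∑' m : Fin r → ℕ, 2 ^ r * (Complex.exp (x * t) *
          ∏ j, (-(q ^ b j * Complex.exp (a j * t))) ^ m j) := by
        rw [← tsum_prod_pi hsummable, ← tsum_mul_left, ← tsum_mul_left]
    _ = _ := by simp only [cexp_mul_prod_neg_pow, mul_assoc]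

theorem exists_pos_forall_norm_pow_mul_exp_lt_one (hb : ∀ j, 0 < b j) (hq : ‖q‖ < 1) :
    ∃ R > 0, ∀ j, ‖q‖ ^ b j * Real.exp (a j * R) < 1 := by
  have hnear : ∀ j, ∀ᶠ R in 𝓝 (0 : ℝ), ‖q‖ ^ b j * Real.exp (a j * R) < 1 := fun j => by
    refine (Continuous.continuousAt (by fun_prop)).eventually_lt continuousAt_const ?_
    simpa using pow_lt_one₀ (norm_nonneg q) hq (hb j).ne'
  obtain ⟨R, hR, hRpos⟩ :=
    (((eventually_all.2 hnear).filter_mono nhdsWithin_le_nhds).and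
      (self_mem_nhdsWithin (s := Set.Ioi (0 : ℝ)))).exists
  exact ⟨R, hRpos, hR⟩

theorem norm_pow_mul_cexp_lt_one {R : ℝ} (hR : ∀ j, ‖q‖ ^ b j * Real.exp (a j * R) < 1)
    {t : ℂ} (ht : ‖t‖ < R) (j : Fin r) : ‖q ^ b j * Complex.exp (a j * t)‖ < 1 := by
  refine lt_of_le_of_lt ?_ (hR j)
  rw [norm_mul, norm_pow]
  gcongr
  refine (Complex.norm_exp_le_exp_norm _).trans (Real.exp_le_exp.2 ?_)
  rw [norm_mul, Complex.norm_natCast]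
  gcongr

theorem summable_norm_qZetaCoeff_mul_exp {R : ℝ} (hR0 : 0 ≤ R)
    (hR : ∀ j, ‖q‖ ^ b j * Real.exp (a j * R) < 1) :
    Summable fun m => ‖2 ^ r * qZetaCoeff b q m‖ * Real.exp (R * ‖(qZetaShift a x m : ℂ)‖) := by
  set ρ : Fin r → ℝ := fun j => ‖q‖ ^ b j * Real.exp (a j * R)
  have hρ0 : ∀ j, 0 ≤ ρ j := fun j =>
    mul_nonneg (pow_nonneg (norm_nonneg q) _) (Real.exp_pos _).le
  have hgeom : ∀ j, Summable fun m : ℕ => ‖ρ j ^ m‖ := fun j => by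
    simpa [norm_pow, abs_of_nonneg (hρ0 j)] using summable_geometric_of_lt_one (hρ0 j) (hR j)
  refine .of_nonneg_of_le (fun m => by positivity) (fun m => ?_)
    (((summable_norm_prod_pi hgeom).of_norm).mul_left (2 ^ r * Real.exp (R * |x|)))
  have hshift : ‖(qZetaShift a x m : ℂ)‖ ≤ |x| + ∑ j, (a j * m j : ℝ) := by
    rw [Complex.norm_real, Real.norm_eq_abs, qZetaShift]
    refine (abs_add_le _ _).trans_eq ?_
    rw [Nat.abs_cast]
    push_cast
    rfl
  have hprod :
      ‖q‖ ^ (∑ j, b j * m j) * Real.exp (R * ∑ j, (a j * m j : ℝ)) = ∏ j, ρ j ^ m j := by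
    rw [← prod_pow_eq_pow_sum, mul_sum, Real.exp_sum, ← prod_mul_distrib]
    refine prod_congr rfl fun j _ => ?_
    rw [pow_mul, mul_pow, ← Real.exp_nat_mul]
    ring_nf
  calc ‖2 ^ r * qZetaCoeff b q m‖ * Real.exp (R * ‖(qZetaShift a x m : ℂ)‖)
      ≤ 2 ^ r * ‖q‖ ^ (∑ j, b j * m j) * Real.exp (R * (|x| + ∑ j, (a j * m j : ℝ))) := by
        simp only [qZetaCoeff, norm_mul, norm_pow, norm_neg, norm_one, one_pow, one_mul,
          Complex.norm_ofNat]
        gcongr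
    _ = 2 ^ r * Real.exp (R * |x|) * ∏ j, ρ j ^ m j := by
        rw [← hprod, mul_add, Real.exp_add]; ring

end QZeta

theorem changhee_qZeta_interpolates_qEuler_general
    (r : ℕ) (a b : Fin r → ℕ)
    (hb : ∀ j, 0 < b j)
    (q : ℂ) (hq1 : ‖q‖ < 1)
    (x : ℝ) (n : ℕ)
    (s : ℂ) (hs : s = -(n : ℂ)) :
    (2 : ℂ) ^ r * ∑' m : Fin r → ℕ,
        (-1 : ℂ) ^ (∑ j, m j) * q ^ (∑ j, b j * m j) *
          (((x + (∑ j, a j * m j : ℕ) : ℝ) : ℂ)) ^ (-s)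
      = iteratedDeriv n
          (fun t : ℂ =>
            (2 : ℂ) ^ r * Complex.exp ((x : ℂ) * t) /
              ∏ j, (q ^ (b j) * Complex.exp ((a j : ℂ) * t) + 1)) 0 := by
  obtain ⟨R, hR, hratio⟩ := exists_pos_forall_norm_pow_mul_exp_lt_one a b q hb hq1
  have hR0 : ‖(0 : ℂ)‖ < R := by simpa using hR
  have hexpansion : (fun t : ℂ => (2 : ℂ) ^ r * Complex.exp ((x : ℂ) * t) /
        ∏ j, (q ^ (b j) * Complex.exp ((a j : ℂ) * t) + 1))
      =ᶠ[𝓝 0] fun t => ∑' m, 2 ^ r * qZetaCoeff b q m * Complex.exp (qZetaShift a x m * t) :=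
    eventuallyEq_of_mem ((isOpen_lt continuous_norm continuous_const).mem_nhds hR0)
      fun t ht => qEulerGenFun_eq_tsum a b q x (norm_pow_mul_cexp_lt_one a b q hratio ht)
  rw [hexpansion.iteratedDeriv_eq, iteratedDeriv_tsum_mul_cexp
    (summable_norm_qZetaCoeff_mul_exp a b q x hR.le hratio) n hR0, ← tsum_mul_left]
  refine tsum_congr fun m => ?_
  rw [hs, neg_neg, Complex.cpow_natCast, mul_zero, Complex.exp_zero, qZetaCoeff, qZetaShift]
  ring

/-- For `0 < |q| < 1`, real `x > 0` and `n` a positive odd integer, the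
multivariate Hurwitz-type `q`-zeta function
`ζ_r(s, x) = 2^r Σ_{n⃗ ∈ ℕ^r} (-1)^{Σ n_j} q^{Σ b_j n_j} (x + Σ a_j n_j)^{-s}`
evaluated at `s = -n` equals the `n`-th iterated derivative at `t = 0` of
`t ↦ 2^r e^{xt} / ∏_j (q^{b_j} e^{a_j t} + 1)`. -/
theorem changhee_qZeta_interpolates_qEuler
    (r : ℕ) (hr : 0 < r) (a b : Fin r → ℕ)
    (ha : ∀ j, 0 < a j) (hb : ∀ j, 0 < b j)
    (q : ℂ) (hq0 : 0 < ‖q‖) (hq1 : ‖q‖ < 1)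
    (x : ℝ) (hx : 0 < x) (n : ℕ) (hn : 0 < n) (hnodd : Odd n)
    (s : ℂ) (hs : s = -(n : ℂ)) :
    (2 : ℂ) ^ r * ∑' m : Fin r → ℕ,
        (-1 : ℂ) ^ (∑ j, m j) * q ^ (∑ j, b j * m j) *
          (((x + (∑ j, a j * m j : ℕ) : ℝ) : ℂ)) ^ (-s)
      = iteratedDeriv n
          (fun t : ℂ =>
            (2 : ℂ) ^ r * Complex.exp ((x : ℂ) * t) /
              ∏ j, (q ^ (b j) * Complex.exp ((a j : ℂ) * t) + 1)) 0 :=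
  changhee_qZeta_interpolates_qEuler_general r a b hb q hq1 x n s hs
end

section
/- Let r be a positive integer, a_1,…,a_r and b_1,…,b_r positive integers, q ∈ ℂ with 0 < |q| < 1, f an odd positive integer, and χ a Dirichlet character modulo f. Then the function s ↦ L_r(s, χ | a_1,…,a_r; b_1,…,b_r) = 2^r Σ_{n_1,…,n_r=1}^∞ (-1)^{n_1+⋯+n_r} q^{b_1 n_1+⋯+b_r n_r} χ(n_1)⋯χ(n_r) (a_1 n_1+⋯+a_r n_r)^{-s} is complex-differentiable at every point of ℂ (an entire function of s). -/
/-!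
Each term is entire in `s`, and on `‖s‖ < k` the term of index `n` is bounded by
`‖q‖ ^ (∑ n_j) * (∑ a_j n_j) ^ k ≤ ∏_j ‖q‖ ^ n_j * ((1 + a_j) n_j) ^ k`, a product of summable
one-variable sequences (geometric decay beats polynomial growth). By the Weierstrass M-test the
series converges locally uniformly, so its sum is holomorphic.
-/

open Finset

theorem Finset.sum_le_prod_one_add {ι R : Type*} [CommSemiring R] [PartialOrder R]
    [IsOrderedRing R] (s : Finset ι) {x : ι → R} (hx : ∀ i ∈ s, 0 ≤ x i) :
    ∑ i ∈ s, x i ≤ ∏ i ∈ s, (1 + x i) := by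
  induction s using Finset.cons_induction with
  | empty => simp
  | cons j s hj ih =>
    simp only [forall_mem_cons] at hx
    have hprod : 1 ≤ ∏ i ∈ s, (1 + x i) :=
      one_le_prod fun i hi => le_add_of_nonneg_right (hx.2 i hi)
    rw [sum_cons, prod_cons, add_mul, one_mul, add_comm (∏ i ∈ s, _)]
    exact add_le_add (le_mul_of_one_le_right hx.1 hprod) (ih hx.2)

theorem Finset.sum_mul_le_prod_one_add_mul {ι : Type*} (s : Finset ι) {a x : ι → ℝ}
    (ha : ∀ i ∈ s, 0 ≤ a i) (hx : ∀ i ∈ s, 1 ≤ x i) :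
    ∑ i ∈ s, a i * x i ≤ ∏ i ∈ s, (1 + a i) * x i := by
  calc ∑ i ∈ s, a i * x i
      ≤ ∏ i ∈ s, (1 + a i * x i) :=
        s.sum_le_prod_one_add fun i hi => mul_nonneg (ha i hi) (zero_le_one.trans (hx i hi))
    _ ≤ ∏ i ∈ s, (1 + a i) * x i :=
        prod_le_prod (fun i hi => add_nonneg zero_le_one
          (mul_nonneg (ha i hi) (zero_le_one.trans (hx i hi))))
          fun i hi => by nlinarith [hx i hi]

theorem summable_pi_prod_of_nonneg {ι β : Type*} [Fintype ι] {g : ι → β → ℝ}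
    (hg0 : ∀ j x, 0 ≤ g j x) (hg : ∀ j, Summable (g j)) :
    Summable fun n : ι → β => ∏ j, g j (n j) := by
  classical
  refine summable_of_sum_le (c := ∏ j, ∑' x, g j x)
    (fun n => prod_nonneg fun j _ => hg0 j (n j)) fun u => ?_
  set s : Finset β := u.biUnion fun n => univ.image n
  calc ∑ n ∈ u, ∏ j, g j (n j)
      ≤ ∑ n ∈ Fintype.piFinset fun _ => s, ∏ j, g j (n j) :=
        sum_le_sum_of_subset_of_nonneg
          (fun n hn => Fintype.mem_piFinset.2 fun j =>
            mem_biUnion.2 ⟨n, hn, mem_image_of_mem n (mem_univ j)⟩)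
          fun n _ _ => prod_nonneg fun j _ => hg0 j (n j)
    _ = ∏ j, ∑ x ∈ s, g j x := sum_prod_piFinset s g
    _ ≤ ∏ j, ∑' x, g j x :=
        prod_le_prod (fun j _ => sum_nonneg fun x _ => hg0 j x)
          fun j _ => (hg j).sum_le_tsum s fun x _ => hg0 j x

theorem summable_pow_mul_geometric_pnat {Q : ℝ} (hQ : ‖Q‖ < 1) (C : ℝ) (k : ℕ) :
    Summable fun m : ℕ+ => Q ^ (m : ℕ) * (C * m) ^ k := by
  have h := (summable_pow_mul_geometric_of_norm_lt_one k hQ).mul_left (C ^ k)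
  refine (summable_pnat_iff_summable_nat.2 h).congr fun m => ?_
  ring

theorem differentiable_tsum_mul_cpow_neg {ι : Type*} (c : ι → ℂ) {N : ι → ℝ}
    (hN : ∀ n, 1 ≤ N n) (hc : ∀ k : ℕ, Summable fun n => ‖c n‖ * N n ^ k) :
    Differentiable ℂ fun s : ℂ => ∑' n, c n * (N n : ℂ) ^ (-s) := by
  intro s
  obtain ⟨k, hk⟩ := exists_nat_gt ‖s‖
  have hdiff :
      DifferentiableOn ℂ (fun s : ℂ => ∑' n, c n * (N n : ℂ) ^ (-s)) (Metric.ball 0 k) := by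
    refine Complex.differentiableOn_tsum_of_summable_norm (hc k)
      (fun n => ?_) Metric.isOpen_ball fun n w hw => ?_
    · have hN0 : (N n : ℂ) ≠ 0 := Complex.ofReal_ne_zero.2 (one_pos.trans_le (hN n)).ne'
      exact ((differentiable_id.neg.const_cpow (Or.inl hN0)).const_mul _).differentiableOn
    · have hre : (-w).re ≤ k := by
        rw [mem_ball_zero_iff] at hw
        exact ((Complex.re_le_norm _).trans_eq (norm_neg w)).trans hw.le
      rw [norm_mul, Complex.norm_cpow_eq_rpow_re_of_pos (one_pos.trans_le (hN n)),
        ← Real.rpow_natCast]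
      exact mul_le_mul_of_nonneg_left (Real.rpow_le_rpow_of_exponent_le (hN n) hre)
        (norm_nonneg _)
  exact hdiff.differentiableAt (Metric.isOpen_ball.mem_nhds (mem_ball_zero_iff.2 hk))

theorem norm_neg_one_pow_mul_pow_mul_prod_dirichletCharacter_le {ι : Type*} [Fintype ι]
    {f : ℕ} (χ : DirichletCharacter ℂ f) {q : ℂ} (hq : ‖q‖ ≤ 1) {b : ι → ℕ}
    (hb : ∀ j, 0 < b j) (n : ι → ℕ) :
    ‖(-1 : ℂ) ^ (∑ j, n j) * q ^ (∑ j, b j * n j) * ∏ j, χ (n j : ZMod f)‖ ≤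
      ∏ j, ‖q‖ ^ n j := by
  have hχ : ‖∏ j, χ (n j : ZMod f)‖ ≤ 1 := by
    rw [norm_prod]
    exact prod_le_one (fun _ _ => norm_nonneg _) fun j _ => χ.norm_le_one _
  have hq : ‖q‖ ^ (∑ j, b j * n j) ≤ ‖q‖ ^ (∑ j, n j) :=
    pow_le_pow_of_le_one (norm_nonneg q) hq
      (sum_le_sum fun j _ => Nat.le_mul_of_pos_left _ (hb j))
  simp only [norm_mul, norm_pow, norm_neg, norm_one, one_pow, one_mul, prod_pow_eq_pow_sum]
  exact (mul_le_of_le_one_right (by positivity) hχ).trans hq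

theorem changhee_qL_entire_general
    (r : ℕ) (hr : 0 < r) (a b : Fin r → ℕ)
    (ha : ∀ j, 0 < a j) (hb : ∀ j, 0 < b j)
    (q : ℂ) (hq1 : ‖q‖ < 1)
    (f : ℕ)
    (χ : DirichletCharacter ℂ f) (s : ℂ) :
    DifferentiableAt ℂ
      (fun s : ℂ =>
        (2 : ℂ) ^ r * ∑' n : Fin r → ℕ+,
          (-1 : ℂ) ^ (∑ j, (n j : ℕ)) * q ^ (∑ j, b j * (n j : ℕ)) *
            (∏ j, χ ((n j : ℕ) : ZMod f)) *
            ((∑ j, a j * (n j : ℕ) : ℕ) : ℂ) ^ (-s)) s := by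
  let c (n : Fin r → ℕ+) : ℂ :=
    (-1 : ℂ) ^ (∑ j, (n j : ℕ)) * q ^ (∑ j, b j * (n j : ℕ)) * ∏ j, χ ((n j : ℕ) : ZMod f)
  let N (n : Fin r → ℕ+) : ℝ := ((∑ j, a j * (n j : ℕ) : ℕ) : ℝ)
  have hN (n : Fin r → ℕ+) : 1 ≤ N n :=
    Nat.one_le_cast.2 <| sum_pos (fun j _ => Nat.mul_pos (ha j) (n j).pos) ⟨⟨0, hr⟩, mem_univ _⟩
  have hN_le (n : Fin r → ℕ+) : N n ≤ ∏ j, (1 + a j : ℝ) * (n j : ℕ) := by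
    simpa [N] using univ.sum_mul_le_prod_one_add_mul (a := fun j => (a j : ℝ))
      (x := fun j => ((n j : ℕ) : ℝ)) (fun j _ => Nat.cast_nonneg _)
      fun j _ => by exact_mod_cast (n j).pos
  have hc (k : ℕ) : Summable fun n => ‖c n‖ * N n ^ k := by
    refine Summable.of_nonneg_of_le (fun n => by positivity) (fun n => ?_)
      (summable_pi_prod_of_nonneg
        (g := fun j (m : ℕ+) => ‖q‖ ^ (m : ℕ) * ((1 + a j : ℝ) * (m : ℕ)) ^ k)
        (fun _ _ => by positivity)
        fun j => summable_pow_mul_geometric_pnat (by rwa [norm_norm]) _ k)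
    rw [prod_mul_distrib, prod_pow]
    exact mul_le_mul
      (norm_neg_one_pow_mul_pow_mul_prod_dirichletCharacter_le χ hq1.le hb fun j => n j)
      (pow_le_pow_left₀ (by positivity) (hN_le n) k) (by positivity) (by positivity)
  have hL := differentiable_tsum_mul_cpow_neg c hN hc
  simp only [N, Complex.ofReal_natCast] at hL
  exact (hL s).const_mul _

/-- For `0 < |q| < 1`, `f` odd and `χ` a Dirichlet character mod `f`, the
multivariate Dirichlet `q`-`L`-function
`s ↦ 2^r Σ_{n⃗ ≥ 1} (-1)^{Σ n_j} q^{Σ b_j n_j} ∏_j χ(n_j) (Σ a_j n_j)^{-s}`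
is complex-differentiable at every point of `ℂ` (an entire function of `s`). -/
theorem changhee_qL_entire
    (r : ℕ) (hr : 0 < r) (a b : Fin r → ℕ)
    (ha : ∀ j, 0 < a j) (hb : ∀ j, 0 < b j)
    (q : ℂ) (hq0 : 0 < ‖q‖) (hq1 : ‖q‖ < 1)
    (f : ℕ) (hf : 0 < f) (hfodd : Odd f)
    (χ : DirichletCharacter ℂ f) (s : ℂ) :
    DifferentiableAt ℂ
      (fun s : ℂ =>
        (2 : ℂ) ^ r * ∑' n : Fin r → ℕ+,
          (-1 : ℂ) ^ (∑ j, (n j : ℕ)) * q ^ (∑ j, b j * (n j : ℕ)) *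
            (∏ j, χ ((n j : ℕ) : ZMod f)) *
            ((∑ j, a j * (n j : ℕ) : ℕ) : ℂ) ^ (-s)) s :=
  changhee_qL_entire_general r hr a b ha hb q hq1 f χ s
end
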